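/- arXiv:2412.03807 — 5 statements merged into one kernel-verified Lean document; each statement's English description precedes it below -/
import Mathlib

section
/- For a finitely supported complex sequence c with f(x) = Σ_{k} c_k e^{-λ(x-k)²}, the squared modulus satisfies |f(x)|² = Σ_m r_m e^{-2λ(x - m/2)²} for all real x, where r_m = e^{λm²/2} Σ_j c̃_{m-j} conj(c̃_j) and c̃_k = c_k e^{-λk²}. -/
open Complex Function
open scoped ComplexConjugate

/-!
Write `f x = ∑ₖ aₖ` with `aₖ = c k · exp(-λ(x-k)²)`. Then `|f x|² = (∑ aₖ)(∑ conj aⱼ)`, and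
regrouping this double sum along `m = k + j` gives `∑ₘ ∑ⱼ a_{m-j} conj aⱼ`. Completing the square,
`exp(-λ(x-(m-j))²) exp(-λ(x-j)²) = exp(λm²/2) exp(-λ(m-j)²) exp(-λj²) exp(-2λ(x-m/2)²)`,
so the inner sum is exactly `r m · exp(-2λ(x-m/2)²)`.
-/

theorem tsum_mul_tsum_eq_tsum_tsum_sub {G R : Type*} [AddGroup G] [TopologicalSpace R] [T3Space R]
    [NonUnitalNonAssocSemiring R] [IsTopologicalSemiring R] {a b : G → R}
    (ha : (support a).Finite) (hb : (support b).Finite) :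
    (∑' k, a k) * ∑' j, b j = ∑' m, ∑' j, a (m - j) * b j := by
  let shear : G × G ≃ G × G :=
    { toFun := fun p => (p.1 - p.2, p.2)
      invFun := fun p => (p.1 + p.2, p.2)
      left_inv := fun p => by simp
      right_inv := fun p => by simp }
  have hab : (support fun p : G × G => a p.1 * b p.2).Finite :=
    (ha.prod hb).subset fun p hp => ⟨left_ne_zero_of_mul hp, right_ne_zero_of_mul hp⟩
  have hfiber (m : G) : Summable fun j => a (m - j) * b j :=
    summable_of_hasFiniteSupport <| hb.subset fun j hj => right_ne_zero_of_mul hj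
  rw [(summable_of_hasFiniteSupport ha).tsum_mul_tsum (summable_of_hasFiniteSupport hb)
    (summable_of_hasFiniteSupport hab), ← shear.tsum_eq]
  exact (shear.summable_iff.mpr (summable_of_hasFiniteSupport hab)).tsum_prod' hfiber

theorem gaussian_mul_gaussian (l x m j : ℝ) :
    Real.exp (-l * (x - (m - j)) ^ 2) * Real.exp (-l * (x - j) ^ 2) =
      Real.exp (l * m ^ 2 / 2) * Real.exp (-l * (m - j) ^ 2) * Real.exp (-l * j ^ 2) *
        Real.exp (-2 * l * (x - m / 2) ^ 2) := by
  simp only [← Real.exp_add]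
  ring_nf

theorem cexp_neg_mul_sub_intCast_sq (l x : ℝ) (k : ℤ) :
    Complex.exp (-(l : ℂ) * ((x : ℂ) - (k : ℂ)) ^ 2) = Real.exp (-l * (x - k) ^ 2) := by
  push_cast
  rfl

theorem stmt_0_general (l : ℝ) (c : ℤ → ℂ)
    (hc : (Function.support c).Finite)
    (f : ℝ → ℂ)
    (hf : ∀ x : ℝ, f x = ∑' k : ℤ, c k * Complex.exp (-(l : ℂ) * ((x : ℂ) - (k : ℂ))^2))
    (ctilde : ℤ → ℂ)
    (hct : ∀ k : ℤ, ctilde k = c k * ((Real.exp (-l * (k : ℝ)^2)) : ℂ))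
    (r : ℤ → ℂ)
    (hr : ∀ m : ℤ, r m = ((Real.exp (l * (m : ℝ)^2 / 2)) : ℂ) *
      ∑' j : ℤ, ctilde (m - j) * (starRingEnd ℂ) (ctilde j)) :
    ∀ x : ℝ, ((‖f x‖)^2 : ℂ) =
      ∑' m : ℤ, r m * ((Real.exp (-2 * l * (x - (m : ℝ)/2)^2)) : ℂ) := by
  intro x
  set a : ℤ → ℂ := fun k => c k * Complex.exp (-(l : ℂ) * ((x : ℂ) - (k : ℂ))^2) with ha_def
  have ha : (support a).Finite := hc.subset fun k hk => left_ne_zero_of_mul hk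
  have ha' : (support fun j => conj (a j)).Finite := by simpa [support] using ha
  have hterm (m j : ℤ) : a (m - j) * conj (a j) = Real.exp (l * (m : ℝ)^2 / 2) *
      (ctilde (m - j) * conj (ctilde j)) * Real.exp (-2 * l * (x - (m : ℝ)/2)^2) := by
    have h := congrArg (fun t : ℝ => (t : ℂ)) (gaussian_mul_gaussian l x m j)
    simp only [ofReal_mul] at h
    simp only [ha_def, hct, cexp_neg_mul_sub_intCast_sq, map_mul, conj_ofReal, Int.cast_sub]
    linear_combination (c (m - j) * conj (c j)) * h
  rw [← ofReal_pow, Complex.sq_norm, ← mul_conj, hf x, conj_tsum,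
    tsum_mul_tsum_eq_tsum_tsum_sub ha ha']
  refine tsum_congr fun m => ?_
  rw [hr m, ← tsum_mul_left, ← tsum_mul_right]
  exact tsum_congr (hterm m)

theorem stmt_0 (l : ℝ) (hl : 0 < l) (c : ℤ → ℂ)
    (hc : (Function.support c).Finite)
    (f : ℝ → ℂ)
    (hf : ∀ x : ℝ, f x = ∑' k : ℤ, c k * Complex.exp (-(l : ℂ) * ((x : ℂ) - (k : ℂ))^2))
    (ctilde : ℤ → ℂ)
    (hct : ∀ k : ℤ, ctilde k = c k * ((Real.exp (-l * (k : ℝ)^2)) : ℂ))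
    (r : ℤ → ℂ)
    (hr : ∀ m : ℤ, r m = ((Real.exp (l * (m : ℝ)^2 / 2)) : ℂ) *
      ∑' j : ℤ, ctilde (m - j) * (starRingEnd ℂ) (ctilde j)) :
    ∀ x : ℝ, ((‖f x‖)^2 : ℂ) =
      ∑' m : ℤ, r m * ((Real.exp (-2 * l * (x - (m : ℝ)/2)^2)) : ℂ) :=
  stmt_0_general l c hc f hf ctilde hct r hr
end

section
/- For a finitely supported complex sequence c, with f(x) = Σ_k c_k e^{-λ(x-k)²} and ω(x) = Σ_k k c_k e^{-λ(x-k)²}, one has for all real x: |f'(x)|²/(4λ²) = x²|f(x)|² + |ω(x)|² - x Σ_n n r_n e^{-2λ(x - n/2)²}, where r_n = e^{λn²/2} Σ_j c̃_{n-j} conj(c̃_j) and c̃_k = c_k e^{-λk²}. -/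
/-!
Differentiating term by term gives `f' = -2λ (x f - ω)`, so `|f'|² / (4λ²) = |x f - ω|²
= x² |f|² + |ω|² - x (ω conj f + f conj ω)` for real `x`. Completing the square,
`e^{-λ(x-k)²} e^{-λ(x-j)²} = e^{λ(k+j)²/2} e^{-λk²} e^{-λj²} e^{-2λ(x-(k+j)/2)²}`, so the double sum
`ω conj f + f conj ω = Σ_{k,j} (k + j) c_k conj c_j e^{-λ(x-k)²} e^{-λ(x-j)²}`, grouped along
`n = k + j`, is exactly `Σ_n n r_n e^{-2λ(x-n/2)²}`.
-/

open Complex ComplexConjugate Function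

theorem tsum_mul_tsum_sub_eq_tsum_tsum {M R : Type*} [AddCommGroup M] [CommSemiring R]
    [TopologicalSpace R] [T3Space R] [IsTopologicalSemiring R] {a b : M → R}
    (ha : a.HasFiniteSupport) (hb : b.HasFiniteSupport) (g : M → R) :
    ∑' n, g n * ∑' j, a (n - j) * b j = ∑' k, ∑' j, g (k + j) * (a k * b j) := by
  let shear : M × M ≃ M × M :=
    { toFun := fun q => (q.1 + q.2, q.2)
      invFun := fun p => (p.1 - p.2, p.2)
      left_inv := fun q => by simp
      right_inv := fun p => by simp }
  set F : M × M → R := fun p => g p.1 * (a (p.1 - p.2) * b p.2)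
  have hF : F.HasFiniteSupport := by
    refine ((ha.prod hb).image shear).subset ?_
    rintro ⟨n, j⟩ hnj
    refine ⟨(n - j, j), ⟨?_, ?_⟩, by simp [shear]⟩
    · exact left_ne_zero_of_mul (right_ne_zero_of_mul hnj)
    · exact right_ne_zero_of_mul (right_ne_zero_of_mul hnj)
  have hFshear : (F ∘ shear).HasFiniteSupport := hF.comp_of_injective shear.injective
  calc ∑' n, g n * ∑' j, a (n - j) * b j = ∑' n, ∑' j, F (n, j) :=
        tsum_congr fun n =>
          ((summable_of_hasFiniteSupport (hb.fun_mul_right _)).tsum_mul_left (g n)).symm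
    _ = ∑' p, F p :=
        (Summable.tsum_prod' (summable_of_hasFiniteSupport hF) fun n =>
          summable_of_hasFiniteSupport ((hb.fun_mul_right _).fun_mul_right _)).symm
    _ = ∑' q, (F ∘ shear) q := (shear.tsum_eq F).symm
    _ = ∑' k, ∑' j, g (k + j) * (a k * b j) := by
        rw [Summable.tsum_prod' (summable_of_hasFiniteSupport hFshear) fun k =>
          summable_of_hasFiniteSupport
            (by simpa [F, shear] using (hb.fun_mul_right _).fun_mul_right _)]
        simp [F, shear]

theorem tsum_tsum_intCast_add_mul {R : Type*} [CommRing R] [TopologicalSpace R] [T2Space R]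
    [IsTopologicalRing R] {A B : ℤ → R} (hA : A.HasFiniteSupport) (hB : B.HasFiniteSupport) :
    ∑' k : ℤ, ∑' j : ℤ, ((k + j : ℤ) : R) * (A k * B j) =
      (∑' k : ℤ, k * A k) * ∑' j, B j + (∑' k, A k) * ∑' j : ℤ, j * B j := by
  have hsum {F : ℤ → R} (hF : F.HasFiniteSupport) : Summable F := summable_of_hasFiniteSupport hF
  calc ∑' k : ℤ, ∑' j : ℤ, ((k + j : ℤ) : R) * (A k * B j)
      = ∑' k : ℤ, ((k * A k) * ∑' j, B j + A k * ∑' j : ℤ, j * B j) := by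
        refine tsum_congr fun k => ?_
        rw [← (hsum hB).tsum_mul_left, ← (hsum (hB.fun_mul_right _)).tsum_mul_left,
          ← (hsum (hB.fun_mul_right _)).tsum_add (hsum ((hB.fun_mul_right _).fun_mul_right _))]
        refine tsum_congr fun j => ?_
        push_cast
        ring
    _ = _ := by
        rw [((hsum (hA.fun_mul_right _)).mul_right _).tsum_add ((hsum hA).mul_right _),
          (hsum (hA.fun_mul_right _)).tsum_mul_right, (hsum hA).tsum_mul_right]

theorem Real.exp_gaussian_mul_exp_gaussian (l x a b : ℝ) :
    Real.exp (-l * (x - a) ^ 2) * Real.exp (-l * (x - b) ^ 2) =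
      Real.exp (l * (a + b) ^ 2 / 2) * Real.exp (-2 * l * (x - (a + b) / 2) ^ 2) *
        (Real.exp (-l * a ^ 2) * Real.exp (-l * b ^ 2)) := by
  simp only [← Real.exp_add]
  congr 1
  ring

theorem hasDerivAt_cexp_gaussian (l a : ℂ) (x : ℝ) :
    HasDerivAt (fun y : ℝ => cexp (-l * ((y : ℂ) - a) ^ 2))
      (cexp (-l * ((x : ℂ) - a) ^ 2) * (-2 * l * ((x : ℂ) - a))) x := by
  have hsub : HasDerivAt (fun y : ℝ => (y : ℂ) - a) 1 x :=
    (hasDerivAt_id x).ofReal_comp.sub_const a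
  convert ((hsub.fun_pow 2).const_mul (-l)).cexp using 1
  ring

noncomputable def gaussianSum (l : ℝ) (c : ℤ → ℂ) (x : ℝ) : ℂ :=
  ∑' k : ℤ, c k * cexp (-(l : ℂ) * ((x : ℂ) - (k : ℂ)) ^ 2)

section GaussianSum

variable {l : ℝ} {c : ℤ → ℂ}

theorem gaussianSum_eq_sum {s : Finset ℤ} (hs : support c ⊆ s) (x : ℝ) :
    gaussianSum l c x = ∑ k ∈ s, c k * cexp (-(l : ℂ) * ((x : ℂ) - (k : ℂ)) ^ 2) :=
  tsum_eq_sum' ((support_mul_subset_left _ _).trans hs)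

theorem hasDerivAt_gaussianSum (hc : c.HasFiniteSupport) (x : ℝ) :
    HasDerivAt (gaussianSum l c)
      (-2 * l * (x * gaussianSum l c x - gaussianSum l (fun k => k * c k) x)) x := by
  set s := Set.Finite.toFinset (s := support c) hc
  have hs : support c ⊆ s := (Set.Finite.coe_toFinset hc).ge
  have hks : support (fun k : ℤ => (k : ℂ) * c k) ⊆ s :=
    (support_mul_subset_right _ _).trans hs
  rw [gaussianSum_eq_sum hs, gaussianSum_eq_sum hks, funext (gaussianSum_eq_sum hs),
    Finset.mul_sum, ← Finset.sum_sub_distrib, Finset.mul_sum]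
  exact (HasDerivAt.fun_sum fun (k : ℤ) _ => (hasDerivAt_cexp_gaussian l k x).const_mul (c k))
    |>.congr_deriv (Finset.sum_congr rfl fun k _ => by ring)

end GaussianSum

noncomputable def autocorrelation (l : ℝ) (a : ℤ → ℂ) (n : ℤ) : ℂ :=
  (Real.exp (l * (n : ℝ) ^ 2 / 2) : ℂ) * ∑' j : ℤ, a (n - j) * conj (a j)

theorem tsum_mul_autocorrelation {l : ℝ} {c : ℤ → ℂ} (hc : c.HasFiniteSupport) (x : ℝ) :
    ∑' n : ℤ, (n : ℂ) * autocorrelation l (fun k => c k * (Real.exp (-l * (k : ℝ) ^ 2) : ℂ)) n *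
        (Real.exp (-2 * l * (x - (n : ℝ) / 2) ^ 2) : ℂ) =
      gaussianSum l (fun k => k * c k) x * conj (gaussianSum l c x) +
        gaussianSum l c x * conj (gaussianSum l (fun k => k * c k) x) := by
  set a : ℤ → ℂ := fun k => c k * (Real.exp (-l * (k : ℝ) ^ 2) : ℂ)
  set A : ℤ → ℂ := fun k => c k * (Real.exp (-l * (x - k) ^ 2) : ℂ)
  have ha : a.HasFiniteSupport := hc.fun_mul_left _
  have hA : A.HasFiniteSupport := hc.fun_mul_left _
  have hgauss (d : ℤ → ℂ) :
      gaussianSum l d x = ∑' k, d k * (Real.exp (-l * (x - k) ^ 2) : ℂ) := by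
    simp [gaussianSum]
  have hpair (k j : ℤ) :
      ((k + j : ℤ) : ℂ) * (Real.exp (l * ((k + j : ℤ) : ℝ) ^ 2 / 2) : ℂ) *
          (Real.exp (-2 * l * (x - ((k + j : ℤ) : ℝ) / 2) ^ 2) : ℂ) * (a k * conj (a j)) =
        ((k + j : ℤ) : ℂ) * (A k * conj (A j)) := by
    have h := congrArg ((↑) : ℝ → ℂ) (Real.exp_gaussian_mul_exp_gaussian l x k j)
    push_cast at h
    simp only [a, A, map_mul, conj_ofReal]
    push_cast
    linear_combination -((k + j : ℂ) * c k * conj (c j)) * h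
  calc _ = ∑' n : ℤ, (n : ℂ) * (Real.exp (l * (n : ℝ) ^ 2 / 2) : ℂ) *
          (Real.exp (-2 * l * (x - (n : ℝ) / 2) ^ 2) : ℂ) * ∑' j : ℤ, a (n - j) * conj (a j) :=
        tsum_congr fun n => by unfold autocorrelation; ring
    _ = ∑' k : ℤ, ∑' j : ℤ, ((k + j : ℤ) : ℂ) * (A k * conj (A j)) := by
        rw [tsum_mul_tsum_sub_eq_tsum_tsum ha (ha.fun_comp (map_zero conj))]
        exact tsum_congr fun k => tsum_congr fun j => hpair k j
    _ = _ := by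
        rw [tsum_tsum_intCast_add_mul hA (hA.fun_comp (map_zero conj)), hgauss, hgauss, conj_tsum,
          conj_tsum]
        simp only [A, map_mul, map_intCast, mul_assoc]

theorem stmt_2 (l : ℝ) (hl : 0 < l) (c : ℤ → ℂ)
    (hc : (Function.support c).Finite)
    (f ω : ℝ → ℂ)
    (hf : ∀ x : ℝ, f x = ∑' k : ℤ, c k * Complex.exp (-(l : ℂ) * ((x : ℂ) - (k : ℂ))^2))
    (hw : ∀ x : ℝ, ω x = ∑' k : ℤ, (k : ℂ) * c k * Complex.exp (-(l : ℂ) * ((x : ℂ) - (k : ℂ))^2))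
    (ctilde : ℤ → ℂ)
    (hct : ∀ k : ℤ, ctilde k = c k * ((Real.exp (-l * (k : ℝ)^2)) : ℂ))
    (r : ℤ → ℂ)
    (hr : ∀ n : ℤ, r n = ((Real.exp (l * (n : ℝ)^2 / 2)) : ℂ) *
      ∑' j : ℤ, ctilde (n - j) * (starRingEnd ℂ) (ctilde j)) :
    ∀ x : ℝ, (‖deriv f x‖^2 / (4 * l^2) : ℂ) =
      (x : ℂ)^2 * (‖f x‖^2 : ℂ) + (‖ω x‖^2 : ℂ)
        - (x : ℂ) * ∑' n : ℤ, (n : ℂ) * r n * ((Real.exp (-2 * l * (x - (n : ℝ)/2)^2)) : ℂ) := by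
  intro x
  obtain rfl : f = gaussianSum l c := funext hf
  obtain rfl : ω = gaussianSum l (fun k => k * c k) := funext hw
  obtain rfl : r = autocorrelation l ctilde := funext hr
  obtain rfl : ctilde = fun k => c k * (Real.exp (-l * (k : ℝ) ^ 2) : ℂ) := funext hct
  have hl' : (l : ℂ) ≠ 0 := ofReal_ne_zero.2 hl.ne'
  rw [(hasDerivAt_gaussianSum hc x).deriv, tsum_mul_autocorrelation hc x]
  simp only [← Complex.mul_conj', map_mul, map_sub, map_neg, map_ofNat, conj_ofReal]
  field_simp
  ring
end

section
/- For a polynomial f (as a nonzero entire function of finite order) satisfying f·f^♮ = g·g^♮ and f'·(f')^♮ = g'·(g')^♮ with g also a polynomial, there exists a unimodular constant α such that f = α·g or f = α·g^♮. (Polynomial case of the conjugate phase retrieval lemma.) -/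
/-!
Write `A = f' f♮`, `B = f (f♮)'`, `C = g' g♮`, `D = g (g♮)'`. Differentiating `f f♮ = g g♮` gives
`A + B = C + D`, and since `(h♮)' = -(h')♮` the second identity gives `A B = C D`; hence `A = C`
or `A = D`. If `A = C`, then `f♮ (f' g - f g') = 0`, so the Wronskian of `f` and `g` vanishes and
`f = α g`, and `f f♮ = g g♮` forces `α conj α = 1`. If `A = D`, the same argument applies with `g♮`
in place of `g`.
-/

open Complex Polynomial

namespace Polynomial

section Wronskian

variable {K : Type*} [Field K] [CharZero K]

theorem natDegree_eq_of_wronskian_eq_zero {p q : K[X]} (hp : p ≠ 0) (hq : q ≠ 0)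
    (h : wronskian p q = 0) : p.natDegree = q.natDegree := by
  have hlc := congrArg leadingCoeff (sub_eq_zero.mp h)
  simp only [leadingCoeff_mul, leadingCoeff_derivative] at hlc
  have hlc' : (p.leadingCoeff * q.leadingCoeff) * (q.natDegree : K)
      = (p.leadingCoeff * q.leadingCoeff) * p.natDegree := by
    linear_combination hlc
  exact_mod_cast (mul_left_cancel₀ (by simp [hp, hq]) hlc').symm

theorem exists_eq_C_mul_of_wronskian_eq_zero {p q : K[X]} (hq : q ≠ 0)
    (h : wronskian p q = 0) : ∃ c : K, p = C c * q := by
  rcases eq_or_ne p 0 with rfl | hp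
  · exact ⟨0, by simp⟩
  refine ⟨p.leadingCoeff / q.leadingCoeff, sub_eq_zero.mp ?_⟩
  set r := p - C (p.leadingCoeff / q.leadingCoeff) * q
  by_contra hr
  have hrq : wronskian r q = 0 := by
    simp only [r, wronskian, derivative_sub, derivative_C_mul] at h ⊢
    linear_combination h
  have hdeg := natDegree_eq_of_wronskian_eq_zero hp hq h
  -- the constant kills the coefficient of `r` at `deg q`, which a vanishing Wronskian makes its degree
  have htop : r.coeff q.natDegree = 0 := by
    rw [coeff_sub, coeff_C_mul, coeff_natDegree, ← hdeg, coeff_natDegree,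
      div_mul_cancel₀ _ (leadingCoeff_ne_zero.mpr hq), sub_self]
  rw [← natDegree_eq_of_wronskian_eq_zero hr hq hrq, coeff_natDegree] at htop
  exact hr (leadingCoeff_eq_zero.mp htop)

end Wronskian

section Factorization

variable {R : Type*} [CommRing R] [NoZeroDivisors R]

theorem derivative_mul_eq_or_of_mul_eq {u v x y : R[X]} (h : u * v = x * y)
    (h' : derivative u * derivative v = derivative x * derivative y) :
    derivative u * v = derivative x * y ∨ derivative u * v = x * derivative y := by
  have hd := congrArg derivative h
  rw [derivative_mul, derivative_mul] at hd
  rw [← sub_eq_zero, ← sub_eq_zero (a := derivative u * v), ← mul_eq_zero]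
  linear_combination (derivative u * v) * hd - (x * y) * h' - (derivative u * derivative v) * h

theorem wronskian_eq_zero_of_mul_eq {u v x y : R[X]} (hv : v ≠ 0) (h : u * v = x * y)
    (h' : derivative u * v = derivative x * y) : wronskian u x = 0 := by
  refine (mul_eq_zero.mp ?_).resolve_left hv
  rw [wronskian]
  linear_combination derivative x * h - x * h'

end Factorization

/-- The paper's `h♮`, with `h♮(z) = conj (h (-conj z))`. -/
noncomputable def conjReflect : ℂ[X] →+* ℂ[X] :=
  (compRingHom (-X)).comp (mapRingHom (starRingEnd ℂ))

theorem eval_conjReflect (p : ℂ[X]) (z : ℂ) :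
    (conjReflect p).eval z = starRingEnd ℂ (p.eval (-starRingEnd ℂ z)) := by
  rw [conjReflect, RingHom.comp_apply, coe_compRingHom_apply, coe_mapRingHom, eval_comp,
    eval_neg, eval_X, eval_map, ← eval₂_at_apply]
  simp

theorem conjReflect_conjReflect (p : ℂ[X]) : conjReflect (conjReflect p) = p :=
  Polynomial.funext fun z => by simp [eval_conjReflect]

theorem conjReflect_eq_zero {p : ℂ[X]} : conjReflect p = 0 ↔ p = 0 :=
  map_eq_zero_iff _ (Function.LeftInverse.injective conjReflect_conjReflect)

theorem conjReflect_C (c : ℂ) : conjReflect (C c) = C (starRingEnd ℂ c) := by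
  simp [conjReflect]

theorem derivative_conjReflect (p : ℂ[X]) :
    derivative (conjReflect p) = -conjReflect (derivative p) := by
  simp [conjReflect, derivative_comp, derivative_map]

theorem norm_eq_one_of_C_mul_conjReflect {c : ℂ} {x : ℂ[X]} (hx : x ≠ 0)
    (h : C c * x * conjReflect (C c * x) = x * conjReflect x) : ‖c‖ = 1 := by
  have hxx : x * conjReflect x ≠ 0 := mul_ne_zero hx (conjReflect_eq_zero.not.mpr hx)
  have hcc : C (c * starRingEnd ℂ c) * (x * conjReflect x) = x * conjReflect x := by
    calc _ = C c * x * conjReflect (C c * x) := by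
          rw [map_mul conjReflect, conjReflect_C, C_mul]; ring
      _ = _ := h
  have hsq : ‖c‖ ^ 2 = 1 := by
    have := C_injective (((mul_eq_right₀ hxx).mp hcc).trans C_1.symm)
    rwa [mul_conj, ← ofReal_one, ofReal_inj, normSq_eq_norm_sq] at this
  exact (pow_eq_one_iff_of_nonneg (norm_nonneg c) two_ne_zero).mp hsq

theorem exists_norm_eq_one_and_eq_C_mul {u x : ℂ[X]}
    (h : u * conjReflect u = x * conjReflect x)
    (h' : derivative u * conjReflect u = derivative x * conjReflect x) :
    ∃ α : ℂ, ‖α‖ = 1 ∧ u = C α * x := by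
  rcases eq_or_ne x 0 with rfl | hx
  · refine ⟨1, norm_one, ?_⟩
    simpa [conjReflect_eq_zero] using h
  have hu : conjReflect u ≠ 0 := by
    intro hu
    rw [hu, mul_zero, eq_comm, mul_eq_zero, conjReflect_eq_zero, or_self] at h
    exact hx h
  obtain ⟨α, rfl⟩ := exists_eq_C_mul_of_wronskian_eq_zero hx (wronskian_eq_zero_of_mul_eq hu h h')
  exact ⟨α, norm_eq_one_of_C_mul_conjReflect hx h, rfl⟩

end Polynomial

theorem stmt_9_general (p q : Polynomial ℂ)
    (h1 : ∀ z : ℂ, p.eval z * (starRingEnd ℂ) (p.eval (-(starRingEnd ℂ) z))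
      = q.eval z * (starRingEnd ℂ) (q.eval (-(starRingEnd ℂ) z)))
    (h2 : ∀ z : ℂ, (Polynomial.derivative p).eval z
        * (starRingEnd ℂ) ((Polynomial.derivative p).eval (-(starRingEnd ℂ) z))
      = (Polynomial.derivative q).eval z
        * (starRingEnd ℂ) ((Polynomial.derivative q).eval (-(starRingEnd ℂ) z))) :
    ∃ α : ℂ, ‖α‖ = 1 ∧
      ((∀ z : ℂ, p.eval z = α * q.eval z)
        ∨ (∀ z : ℂ, p.eval z = α * (starRingEnd ℂ) (q.eval (-(starRingEnd ℂ) z)))) := by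
  have hA : p * conjReflect p = q * conjReflect q :=
    Polynomial.funext fun z => by simpa only [eval_mul, eval_conjReflect] using h1 z
  have hB : derivative p * derivative (conjReflect p)
      = derivative q * derivative (conjReflect q) := by
    refine Polynomial.funext fun z => ?_
    simpa only [derivative_conjReflect, mul_neg, eval_neg, eval_mul, eval_conjReflect,
      neg_inj] using h2 z
  rcases derivative_mul_eq_or_of_mul_eq hA hB with hB' | hB'
  · obtain ⟨α, hα, rfl⟩ := exists_norm_eq_one_and_eq_C_mul hA hB'
    exact ⟨α, hα, Or.inl fun z => by rw [eval_mul, eval_C]⟩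
  · obtain ⟨α, hα, rfl⟩ := exists_norm_eq_one_and_eq_C_mul (u := p) (x := conjReflect q)
      (by rw [conjReflect_conjReflect, hA, mul_comm])
      (by rw [conjReflect_conjReflect, hB', mul_comm])
    exact ⟨α, hα, Or.inr fun z => by rw [eval_mul, eval_C, eval_conjReflect]⟩

theorem stmt_9 (p q : Polynomial ℂ) (hp : p ≠ 0) (hq : q ≠ 0)
    (h1 : ∀ z : ℂ, p.eval z * (starRingEnd ℂ) (p.eval (-(starRingEnd ℂ) z))
      = q.eval z * (starRingEnd ℂ) (q.eval (-(starRingEnd ℂ) z)))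
    (h2 : ∀ z : ℂ, (Polynomial.derivative p).eval z
        * (starRingEnd ℂ) ((Polynomial.derivative p).eval (-(starRingEnd ℂ) z))
      = (Polynomial.derivative q).eval z
        * (starRingEnd ℂ) ((Polynomial.derivative q).eval (-(starRingEnd ℂ) z))) :
    ∃ α : ℂ, ‖α‖ = 1 ∧
      ((∀ z : ℂ, p.eval z = α * q.eval z)
        ∨ (∀ z : ℂ, p.eval z = α * (starRingEnd ℂ) (q.eval (-(starRingEnd ℂ) z)))) :=
  stmt_9_general p q h1 h2
end

section
/- For a finitely supported sequence c with f(x) = Σ_{k=K_-}^{K_+} c_k e^{-(x-k)²}, c_{K_-} ≠ 0, and c̃_k = c_k e^{-k²}: the coefficient A_{2K_-+1} of the expansion e^{2x²}|f(x)|² = Σ_m A_m e^{2mx} equals 2·c̃_{K_-}·Re(c̃_{K_-+1}) when c̃_{K_-} is a positive real; consequently Re(c̃_{K_-+1}) = A_{2K_-+1}/(2√A_{2K_-}). -/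
/-!
Writing `c̃ₖ = cₖ e^{-k²}`, the identity `e^{-(x-k)²} = e^{-x²} e^{2kx} e^{-k²}` gives
`f(x) = e^{-x²} Σₖ c̃ₖ e^{2kx}`, so `e^{2x²}|f(x)|²` is the product of `Σₖ c̃ₖ e^{2kx}` with its
conjugate `Σⱼ conj(c̃ⱼ) e^{2jx}`, and `A` is the Cauchy product of the two coefficient sequences.
Because `c̃` vanishes below `K₋`, only `j = K₋` contributes to `A_{2K₋}` and only `j = K₋, K₋ + 1`
to `A_{2K₋+1}`; with `c̃_{K₋} = r > 0` this gives `A_{2K₋} = r²` and `A_{2K₋+1} = 2r Re c̃_{K₋+1}`.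
-/

open Complex Finset ComplexConjugate

section CauchyProduct

variable {R : Type*} [CommSemiring R] {Km Kp : ℤ} {a : ℤ → R}

theorem sum_mul_sum_eq_sum_Icc_conv (ha : ∀ k ∉ Icc Km Kp, a k = 0) (b E : ℤ → R)
    (hE : ∀ k j, E (k + j) = E k * E j) :
    (∑ k ∈ Icc Km Kp, a k * E k) * (∑ j ∈ Icc Km Kp, b j * E j) =
      ∑ m ∈ Icc (2 * Km) (2 * Kp), (∑ j ∈ Icc Km Kp, a (m - j) * b j) * E m := by
  simp_rw [sum_mul_sum, sum_mul]
  rw [sum_comm, sum_comm (s := Icc (2 * Km) (2 * Kp))]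
  refine sum_congr rfl fun j hj ↦ ?_
  rw [mem_Icc] at hj
  have hshift : Icc (2 * Km) (2 * Kp) = (Icc (2 * Km - j) (2 * Kp - j)).map (addRightEmbedding j) := by
    rw [map_add_right_Icc, sub_add_cancel, sub_add_cancel]
  rw [hshift, sum_map]
  simp only [addRightEmbedding_apply, add_sub_cancel_right]
  refine (sum_subset (Icc_subset_Icc (by omega) (by omega)) fun k _ hk ↦ ?_).trans
    (sum_congr rfl fun k _ ↦ by rw [hE]; ring)
  rw [ha k hk, zero_mul, zero_mul]

theorem sum_Icc_two_mul_sub_mul (ha : ∀ k ∉ Icc Km Kp, a k = 0) (hK : Km ≤ Kp) (b : ℤ → R) :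
    ∑ j ∈ Icc Km Kp, a (2 * Km - j) * b j = a Km * b Km := by
  rw [sum_eq_single_of_mem Km (by simpa using hK) fun j hj hne ↦ by
    rw [ha _ (by simp only [mem_Icc] at *; omega), zero_mul]]
  rw [two_mul, add_sub_cancel_right]

theorem sum_Icc_two_mul_add_one_sub_mul (ha : ∀ k ∉ Icc Km Kp, a k = 0) (hK : Km < Kp)
    (b : ℤ → R) :
    ∑ j ∈ Icc Km Kp, a (2 * Km + 1 - j) * b j = a (Km + 1) * b Km + a Km * b (Km + 1) := by
  rw [← sum_subset (Icc_subset_Icc le_rfl (by omega : Km + 1 ≤ Kp)) fun j hj hj' ↦ by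
    rw [ha _ (by simp only [mem_Icc] at *; omega), zero_mul]]
  rw [show Icc Km (Km + 1) = {Km, Km + 1} by ext; simp; omega, sum_pair (by omega)]
  congr 3 <;> ring

end CauchyProduct

theorem Complex.exp_neg_sub_sq (z w : ℂ) :
    cexp (-(z - w) ^ 2) = cexp (-z ^ 2) * (cexp (-w ^ 2) * cexp (2 * w * z)) := by
  rw [← Complex.exp_add, ← Complex.exp_add]
  ring_nf

theorem sum_mul_cexp_neg_sub_sq (s : Finset ℤ) (c : ℤ → ℂ) (x : ℝ) :
    ∑ k ∈ s, c k * cexp (-((x : ℂ) - k) ^ 2) =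
      cexp (-(x : ℂ) ^ 2) * ∑ k ∈ s, c k * (Real.exp (-(k : ℝ) ^ 2) : ℂ) * cexp (2 * k * x) := by
  simp_rw [mul_sum, Complex.exp_neg_sub_sq, Complex.ofReal_exp]
  push_cast
  exact sum_congr rfl fun k _ ↦ by ring

theorem conj_cexp_two_mul_intCast_mul_ofReal (k : ℤ) (x : ℝ) :
    conj (cexp (2 * k * x)) = cexp (2 * k * x) := by
  rw [← Complex.exp_conj]
  simp [map_ofNat]

theorem cexp_two_mul_intCast_add (k j : ℤ) (z : ℂ) :
    cexp (2 * ((k + j : ℤ) : ℂ) * z) = cexp (2 * k * z) * cexp (2 * j * z) := by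
  rw [← Complex.exp_add]
  push_cast
  ring_nf

theorem ofReal_exp_two_mul_sq_mul_norm_cexp_neg_sq_mul_sq (x : ℝ) (S : ℂ) :
    (Real.exp (2 * x ^ 2) : ℂ) * (‖cexp (-(x : ℂ) ^ 2) * S‖ : ℂ) ^ 2 = S * conj S := by
  rw [← Complex.mul_conj', map_mul, ← Complex.exp_conj]
  have hinv : (Real.exp (2 * x ^ 2) : ℂ) * cexp (-(x : ℂ) ^ 2) * cexp (-(x : ℂ) ^ 2) = 1 := by
    rw [Complex.ofReal_exp, ← Complex.exp_add, ← Complex.exp_add]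
    push_cast
    ring_nf
    exact Complex.exp_zero
  simp only [map_neg, map_pow, Complex.conj_ofReal]
  linear_combination (S * conj S) * hinv

theorem stmt_14_general (Km Kp : ℤ) (hK : Km < Kp)
    (c : ℤ → ℂ) (hsupp : ∀ k : ℤ, k ∉ Finset.Icc Km Kp → c k = 0)
    (f : ℝ → ℂ)
    (hf : ∀ x : ℝ, f x = ∑ k ∈ Finset.Icc Km Kp,
      c k * Complex.exp (-(((x : ℂ) - (k : ℂ))^2)))
    (ctilde : ℤ → ℂ)
    (hct : ∀ k : ℤ, ctilde k = c k * ((Real.exp (-(k : ℝ)^2)) : ℂ))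
    (hreal : (ctilde Km).im = 0) (hpos : 0 < (ctilde Km).re)
    (A : ℤ → ℂ)
    (hA : ∀ m : ℤ, A m = ∑ j ∈ Finset.Icc Km Kp, ctilde (m - j) * (starRingEnd ℂ) (ctilde j)) :
    (∀ x : ℝ, ((Real.exp (2 * x^2)) : ℂ) * ((‖f x‖)^2 : ℂ) =
        ∑ m ∈ Finset.Icc (2 * Km) (2 * Kp), A m * Complex.exp (2 * (m : ℂ) * (x : ℂ)))
      ∧ A (2 * Km + 1) = 2 * ctilde Km * (((ctilde (Km + 1)).re : ℝ) : ℂ)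
      ∧ (ctilde (Km + 1)).re = (A (2 * Km + 1)).re / (2 * Real.sqrt ((A (2 * Km)).re)) := by
  have hct0 : ∀ k ∉ Icc Km Kp, ctilde k = 0 := fun k hk ↦ by rw [hct, hsupp k hk, zero_mul]
  have hKm_real : ctilde Km = ((ctilde Km).re : ℂ) := Complex.ext rfl (by simp [hreal])
  have hA0 : A (2 * Km) = ctilde Km * conj (ctilde Km) := by
    rw [hA, sum_Icc_two_mul_sub_mul hct0 hK.le]
  have hA1 : A (2 * Km + 1) = 2 * ctilde Km * ((ctilde (Km + 1)).re : ℂ) := by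
    rw [hA, sum_Icc_two_mul_add_one_sub_mul hct0 hK, hKm_real, conj_ofReal, mul_comm,
      ← mul_add, add_conj]
    push_cast
    ring
  refine ⟨fun x ↦ ?_, hA1, ?_⟩
  · rw [hf, sum_mul_cexp_neg_sub_sq, ofReal_exp_two_mul_sq_mul_norm_cexp_neg_sq_mul_sq, map_sum]
    simp only [← hct, map_mul, conj_cexp_two_mul_intCast_mul_ofReal]
    rw [sum_mul_sum_eq_sum_Icc_conv hct0 _ _ fun k j ↦ cexp_two_mul_intCast_add k j x]
    simp only [hA]
  · rw [hA0, hA1, hKm_real]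
    simp only [conj_ofReal, ← ofReal_mul, ← ofReal_ofNat, ofReal_re]
    rw [Real.sqrt_mul_self hpos.le]
    field_simp

theorem stmt_14 (Km Kp : ℤ) (hK : Km < Kp)
    (c : ℤ → ℂ) (hsupp : ∀ k : ℤ, k ∉ Finset.Icc Km Kp → c k = 0) (hKm : c Km ≠ 0)
    (f : ℝ → ℂ)
    (hf : ∀ x : ℝ, f x = ∑ k ∈ Finset.Icc Km Kp,
      c k * Complex.exp (-(((x : ℂ) - (k : ℂ))^2)))
    (ctilde : ℤ → ℂ)
    (hct : ∀ k : ℤ, ctilde k = c k * ((Real.exp (-(k : ℝ)^2)) : ℂ))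
    (hreal : (ctilde Km).im = 0) (hpos : 0 < (ctilde Km).re)
    (A : ℤ → ℂ)
    (hA : ∀ m : ℤ, A m = ∑ j ∈ Finset.Icc Km Kp, ctilde (m - j) * (starRingEnd ℂ) (ctilde j)) :
    (∀ x : ℝ, ((Real.exp (2 * x^2)) : ℂ) * ((‖f x‖)^2 : ℂ) =
        ∑ m ∈ Finset.Icc (2 * Km) (2 * Kp), A m * Complex.exp (2 * (m : ℂ) * (x : ℂ)))
      ∧ A (2 * Km + 1) = 2 * ctilde Km * (((ctilde (Km + 1)).re : ℝ) : ℂ)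
      ∧ (ctilde (Km + 1)).re = (A (2 * Km + 1)).re / (2 * Real.sqrt ((A (2 * Km)).re)) :=
  stmt_14_general Km Kp hK c hsupp f hf ctilde hct hreal hpos A hA
end

section
/- If two finite Gaussian sums f(x) = Σ_{k=K_-}^{K_+} c_k e^{-λ(x-βk)²} and g(x) = Σ_{k=K_-}^{K_+} c'_k e^{-λ(x-βk)²} satisfy |f(γ)| = |g(γ)| at 2(K_+-K_-)+1 distinct real points γ, then |f(x)| = |g(x)| for all x ∈ ℝ. -/
/-!
With `t = exp (2λβx)`, completing the square gives
`exp (-λ(x - βk)²) = exp (-λx² + 2λβK₋x) · exp (-λβ²k²) · t^(k - K₋)`,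
so `f x` and `g x` are the same real factor times `p(t)` and `q(t)` for complex polynomials
`p, q` of degree at most `K₊ - K₋`. For real `t`, `|p(t)|² - |q(t)|²` is the value of the
polynomial `p p̄ - q q̄` of degree at most `2(K₊ - K₋)`; it vanishes at the `2(K₊ - K₋) + 1`
distinct points `exp (2λβγ)`, hence identically.
-/

open Complex Polynomial

namespace Polynomial

theorem eval_mul_map_conj_ofReal (p : ℂ[X]) (t : ℝ) :
    (p * p.map (starRingEnd ℂ)).eval (t : ℂ) = ((‖p.eval (t : ℂ)‖ ^ 2 : ℝ) : ℂ) := by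
  have hconj : (p.map (starRingEnd ℂ)).eval (t : ℂ) = starRingEnd ℂ (p.eval (t : ℂ)) := by
    rw [← eval_map_apply, conj_ofReal]
  rw [eval_mul, hconj, mul_conj, normSq_eq_norm_sq]

theorem norm_eval_ofReal_eq_of_card_lt {N : ℕ} {p q : ℂ[X]} (hp : p.natDegree ≤ N)
    (hq : q.natDegree ≤ N) {ι : Type*} [Fintype ι] {s : ι → ℝ} (hs : Function.Injective s)
    (hcard : 2 * N < Fintype.card ι) (hsamp : ∀ i, ‖p.eval (s i : ℂ)‖ = ‖q.eval (s i : ℂ)‖)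
    (t : ℝ) : ‖p.eval (t : ℂ)‖ = ‖q.eval (t : ℂ)‖ := by
  have hdeg : ∀ r : ℂ[X], r.natDegree ≤ N → (r * r.map (starRingEnd ℂ)).natDegree ≤ 2 * N :=
    fun r hr => (natDegree_mul_le_of_le hr (natDegree_map_le.trans hr)).trans_eq (two_mul N).symm
  have hsq : p * p.map (starRingEnd ℂ) = q * q.map (starRingEnd ℂ) :=
    eq_of_natDegree_lt_card_of_eval_eq _ _ (ofReal_injective.comp hs)
      (fun i => by simp only [Function.comp_apply, eval_mul_map_conj_ofReal, hsamp i])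
      (max_le (hdeg p hp) (hdeg q hq) |>.trans_lt hcard)
  have h := congrArg (eval (t : ℂ)) hsq
  rw [eval_mul_map_conj_ofReal, eval_mul_map_conj_ofReal, ofReal_inj] at h
  exact (sq_eq_sq₀ (norm_nonneg _) (norm_nonneg _)).mp h

end Polynomial

noncomputable def gaussianSumPoly (l b : ℝ) (Km Kp : ℤ) (c : ℤ → ℂ) : ℂ[X] :=
  ∑ k ∈ Finset.Icc Km Kp, C (c k * exp (-(l : ℂ) * b ^ 2 * k ^ 2)) * X ^ (k - Km).toNat

theorem natDegree_gaussianSumPoly_le (l b : ℝ) (Km Kp : ℤ) (c : ℤ → ℂ) :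
    (gaussianSumPoly l b Km Kp c).natDegree ≤ (Kp - Km).toNat := by
  refine natDegree_sum_le_of_forall_le _ _ fun k hk => ?_
  refine (natDegree_C_mul_le _ _).trans ?_
  rw [natDegree_X_pow]
  have := (Finset.mem_Icc.mp hk).2
  omega

theorem gaussian_eq_mul_pow (l b x : ℝ) {Km k : ℤ} (hk : Km ≤ k) :
    exp (-(l : ℂ) * ((x : ℂ) - (b : ℂ) * (k : ℂ)) ^ 2) =
      ((Real.exp (-l * x ^ 2 + 2 * l * b * Km * x) : ℝ) : ℂ) * exp (-(l : ℂ) * b ^ 2 * k ^ 2) *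
        ((Real.exp (2 * l * b * x) : ℝ) : ℂ) ^ (k - Km).toNat := by
  have hcast : (((k - Km).toNat : ℕ) : ℂ) = (k : ℂ) - Km := by
    rw [← Int.cast_natCast, Int.toNat_of_nonneg (sub_nonneg.mpr hk)]
    push_cast
    ring
  simp only [ofReal_exp, ← exp_nat_mul, hcast, ← exp_add]
  congr 1
  push_cast
  ring

theorem gaussian_sum_eq_mul_eval (l b x : ℝ) (Km Kp : ℤ) (c : ℤ → ℂ) :
    ∑ k ∈ Finset.Icc Km Kp, c k * exp (-(l : ℂ) * ((x : ℂ) - (b : ℂ) * (k : ℂ)) ^ 2) =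
      ((Real.exp (-l * x ^ 2 + 2 * l * b * Km * x) : ℝ) : ℂ) *
        (gaussianSumPoly l b Km Kp c).eval ((Real.exp (2 * l * b * x) : ℝ) : ℂ) := by
  simp only [gaussianSumPoly, eval_finsetSum, eval_mul, eval_C, eval_pow, eval_X, Finset.mul_sum]
  refine Finset.sum_congr rfl fun k hk => ?_
  rw [gaussian_eq_mul_pow l b x (Finset.mem_Icc.mp hk).1]
  ring

theorem stmt_18_general (l b : ℝ) (hl : 0 < l) (hb : 0 < b) (Km Kp : ℤ)
    (c c' : ℤ → ℂ)
    (f g : ℝ → ℂ)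
    (hf : ∀ x : ℝ, f x = ∑ k ∈ Finset.Icc Km Kp,
      c k * Complex.exp (-(l : ℂ) * ((x : ℂ) - (b : ℂ) * (k : ℂ))^2))
    (hg : ∀ x : ℝ, g x = ∑ k ∈ Finset.Icc Km Kp,
      c' k * Complex.exp (-(l : ℂ) * ((x : ℂ) - (b : ℂ) * (k : ℂ))^2))
    (Γ : Finset ℝ) (hcard : Γ.card = 2 * (Kp - Km).toNat + 1)
    (hsamp : ∀ γ ∈ Γ, ‖f γ‖ = ‖g γ‖) :
    ∀ x : ℝ, ‖f x‖ = ‖g x‖ := by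
  have hnorm : ∀ x : ℝ, ‖f x‖ = ‖g x‖ ↔
      ‖(gaussianSumPoly l b Km Kp c).eval ((Real.exp (2 * l * b * x) : ℝ) : ℂ)‖ =
        ‖(gaussianSumPoly l b Km Kp c').eval ((Real.exp (2 * l * b * x) : ℝ) : ℂ)‖ := fun x => by
    rw [hf, hg, gaussian_sum_eq_mul_eval, gaussian_sum_eq_mul_eval, norm_mul, norm_mul,
      mul_right_inj' (by simp)]
  have hinj : Function.Injective fun γ : Γ => Real.exp (2 * l * b * γ) := fun γ γ' h =>
    Subtype.ext <| mul_left_cancel₀ (by positivity) (Real.exp_injective h)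
  intro x
  refine (hnorm x).mpr <| norm_eval_ofReal_eq_of_card_lt (natDegree_gaussianSumPoly_le ..)
    (natDegree_gaussianSumPoly_le ..) hinj ?_ (fun γ => (hnorm γ).mp (hsamp γ γ.2)) _
  rw [Fintype.card_coe, hcard]
  omega

theorem stmt_18 (l b : ℝ) (hl : 0 < l) (hb : 0 < b) (Km Kp : ℤ) (hK : Km ≤ Kp)
    (c c' : ℤ → ℂ)
    (f g : ℝ → ℂ)
    (hf : ∀ x : ℝ, f x = ∑ k ∈ Finset.Icc Km Kp,
      c k * Complex.exp (-(l : ℂ) * ((x : ℂ) - (b : ℂ) * (k : ℂ))^2))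
    (hg : ∀ x : ℝ, g x = ∑ k ∈ Finset.Icc Km Kp,
      c' k * Complex.exp (-(l : ℂ) * ((x : ℂ) - (b : ℂ) * (k : ℂ))^2))
    (Γ : Finset ℝ) (hcard : Γ.card = 2 * (Kp - Km).toNat + 1)
    (hsamp : ∀ γ ∈ Γ, ‖f γ‖ = ‖g γ‖) :
    ∀ x : ℝ, ‖f x‖ = ‖g x‖ :=
  stmt_18_general l b hl hb Km Kp c c' f g hf hg Γ hcard hsamp
end
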